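/- Let A be an AM-algebra with unit e. Then there exist a compact Hausdorff space K and a linear bijection T : A → C(K,ℝ) such that T is isometric (‖Tx‖∞ = ‖x‖ for all x), multiplicative (T(xy) = (Tx)(Ty) for all x, y), a lattice homomorphism (T(x ⊔ y) = Tx ⊔ Ty for all x, y), and satisfies Te = 1 (the constant one function). -/

import Mathlib

/-!
A state is a positive functional `φ` with `φ e = 1`; the states form a weak-* compact convex
set. The Hahn–Banach theorem for the sublinear functional `x ↦ ‖x⁺‖` gives, for every `u ≥ 0`, a
state with `φ u = ‖u‖`, and by Bauer's maximum principle this state can be taken extreme.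
An extreme state `φ` is multiplicative: since `-‖x‖ • e ≤ x ≤ ‖x‖ • e`, the functionals
`y ↦ φ ((‖x‖ • e ± x) y)` are positive and add up to `2 ‖x‖ φ`, so each is a multiple of `φ`.
Disjoint positive elements have product zero (`u v ≤ c • (u ⊓ v)`), hence multiplicative states
also preserve `⊔`. Evaluation on the compact set `K` of multiplicative states is therefore an
isometric lattice and algebra homomorphism `A → C(K, ℝ)`; its range is closed, so by
Stone–Weierstrass it is all of `C(K, ℝ)`.
-/

open ContinuousMap Filter Topology

theorem IsCompact.exists_mem_extremePoints_isMaxOn {E : Type*} [AddCommGroup E] [Module ℝ E]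
    [TopologicalSpace E] [T2Space E] [IsTopologicalAddGroup E] [ContinuousSMul ℝ E]
    [LocallyConvexSpace ℝ E] {s : Set E} (hs : IsCompact s) (hne : s.Nonempty)
    (l : StrongDual ℝ E) : ∃ x ∈ s.extremePoints ℝ, IsMaxOn l s x := by
  obtain ⟨z, hzs, hz⟩ := hs.exists_isMaxOn hne l.continuous.continuousOn
  have hF : IsExposed ℝ s {y ∈ s | ∀ w ∈ s, l w ≤ l y} := fun _ => ⟨l, rfl⟩
  obtain ⟨x, hx⟩ := (hF.isCompact hs).extremePoints_nonempty ⟨z, hzs, hz⟩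
  exact ⟨x, hF.isExtreme.extremePoints_subset_extremePoints hx, hx.1.2⟩

theorem ContinuousMap.surjective_of_isometry_of_separatesPoints {K E : Type*}
    [TopologicalSpace K] [CompactSpace K] [NormedAddCommGroup E] [NormedSpace ℝ E]
    [CompleteSpace E] (T : E →ₗ[ℝ] C(K, ℝ)) (hT : ∀ x, ‖T x‖ = ‖x‖)
    (hone : 1 ∈ LinearMap.range T)
    (hmul : ∀ f g, f ∈ LinearMap.range T → g ∈ LinearMap.range T → f * g ∈ LinearMap.range T)
    (hsep : ∀ k₁ k₂ : K, k₁ ≠ k₂ → ∃ x, T x k₁ ≠ T x k₂) : Function.Surjective T := by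
  let R := (LinearMap.range T).toSubalgebra hone hmul
  have hR : R.topologicalClosure = ⊤ :=
    subalgebra_topologicalClosure_eq_top_of_separatesPoints R fun k₁ k₂ h => by
      obtain ⟨x, hx⟩ := hsep k₁ k₂ h
      exact ⟨T x, ⟨T x, ⟨x, rfl⟩, rfl⟩, hx⟩
  have hclosed : IsClosed (R : Set C(K, ℝ)) :=
    (AddMonoidHomClass.isometry_of_norm T hT).isClosedEmbedding.isClosed_range
  intro f
  have hf : f ∈ closure (R : Set C(K, ℝ)) := (hR ▸ Algebra.mem_top : f ∈ R.topologicalClosure)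
  rwa [hclosed.closure_eq] at hf

section OrderedModule

variable {𝕜 α : Type*} [Field 𝕜] [LinearOrder 𝕜] [IsStrictOrderedRing 𝕜] [AddCommGroup α]
  [Lattice α] [Module 𝕜 α] [PosSMulMono 𝕜 α]

theorem smul_inf_of_pos {c : 𝕜} (hc : 0 < c) (a b : α) : c • (a ⊓ b) = c • a ⊓ c • b :=
  (OrderIso.smulRight hc).map_inf a b

theorem smul_posPart_of_pos {c : 𝕜} (hc : 0 < c) (a : α) : (c • a)⁺ = c • a⁺ := by
  have := (OrderIso.smulRight hc).map_sup a 0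
  simp only [OrderIso.smulRight_apply, smul_zero] at this
  exact this.symm

theorem nonneg_of_abs_le_smul_self [IsOrderedAddMonoid α] {a : α} {l : 𝕜} (hl : 0 ≤ l)
    (h : |a| ≤ l • a) : 0 ≤ a := by
  have h1 : 0 ≤ (l + 1) • a := by
    rw [add_smul, one_smul, ← neg_le_iff_add_nonneg]
    exact (neg_le_abs a).trans h
  simpa [smul_smul, inv_mul_cancel₀ (by positivity : l + 1 ≠ 0)] using
    smul_nonneg (inv_nonneg.2 (by positivity : 0 ≤ l + 1)) h1

end OrderedModule

theorem norm_posPart_add_le {α : Type*} [NormedAddCommGroup α] [Lattice α] [HasSolidNorm α]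
    [IsOrderedAddMonoid α] (a b : α) : ‖(a + b)⁺‖ ≤ ‖a⁺‖ + ‖b⁺‖ := by
  have h : (a + b)⁺ ≤ a⁺ + b⁺ :=
    sup_le (add_le_add le_sup_left le_sup_left) (add_nonneg le_sup_right le_sup_right)
  calc ‖(a + b)⁺‖ ≤ ‖a⁺ + b⁺‖ := norm_le_norm_of_abs_le_abs <| by
        rwa [abs_of_nonneg (posPart_nonneg _),
          abs_of_nonneg (add_nonneg (posPart_nonneg _) (posPart_nonneg _))]
    _ ≤ ‖a⁺‖ + ‖b⁺‖ := norm_add_le _ _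

namespace AMSpace

section

variable {A : Type*} [NormedAddCommGroup A] [NormedSpace ℝ A]

noncomputable def evalOn (K : Set (WeakDual ℝ A)) : A →ₗ[ℝ] C(K, ℝ) where
  toFun x := ⟨fun φ => (φ : WeakDual ℝ A) x,
    (WeakDual.eval_continuous x).comp continuous_subtype_val⟩
  map_add' x y := by ext φ; exact map_add (φ : WeakDual ℝ A) x y
  map_smul' c x := by ext φ; exact map_smul (φ : WeakDual ℝ A) c x

theorem norm_evalOn {K : Set (WeakDual ℝ A)} [CompactSpace K] {x : A}
    (hle : ∀ φ ∈ K, |φ x| ≤ ‖x‖) (hge : ∃ φ ∈ K, |φ x| = ‖x‖) : ‖evalOn K x‖ = ‖x‖ := by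
  obtain ⟨φ, hφ, hφx⟩ := hge
  refine le_antisymm ((ContinuousMap.norm_le _ (norm_nonneg x)).2 fun ψ => hle ψ ψ.2) ?_
  calc ‖x‖ = ‖evalOn K x ⟨φ, hφ⟩‖ := by rw [Real.norm_eq_abs, ← hφx]; rfl
    _ ≤ ‖evalOn K x‖ := (evalOn K x).norm_coe_le_norm _

variable [Preorder A]

def stateSet (e : A) : Set (WeakDual ℝ A) := {φ | (∀ a, 0 ≤ a → 0 ≤ φ a) ∧ φ e = 1}

def characterSet (mul : A →ₗ[ℝ] A →ₗ[ℝ] A) (e : A) : Set (WeakDual ℝ A) :=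
  {φ | φ ∈ stateSet e ∧ ∀ x y, φ (mul x y) = φ x * φ y}

variable {e : A}

theorem isClosed_stateSet : IsClosed (stateSet e) := by
  simp only [stateSet, Set.ofPred_and, Set.ofPred_forall]
  exact (isClosed_iInter fun a => isClosed_iInter fun _ =>
    isClosed_le continuous_const (WeakDual.eval_continuous a)).inter
      (isClosed_eq (WeakDual.eval_continuous e) continuous_const)

end

variable {A : Type*} [NormedAddCommGroup A] [Lattice A] [IsOrderedAddMonoid A] [NormedSpace ℝ A]
  {e : A} (mul : A →ₗ[ℝ] A →ₗ[ℝ] A)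

theorem abs_apply_le_of_nonneg (hle : ∀ x : A, |x| ≤ ‖x‖ • e) {ψ : A →ₗ[ℝ] ℝ}
    (hψ : ∀ a, 0 ≤ a → 0 ≤ ψ a) (x : A) : |ψ x| ≤ ψ e * ‖x‖ := by
  have hmono : ∀ a b, a ≤ b → ψ a ≤ ψ b := fun a b h => by
    simpa using hψ _ (sub_nonneg.2 h)
  have h₁ := hmono _ _ (neg_le.1 ((neg_le_abs x).trans (hle x)))
  have h₂ := hmono _ _ ((le_abs_self x).trans (hle x))
  simp only [map_neg, map_smul, smul_eq_mul] at h₁ h₂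
  exact abs_le.2 ⟨by linarith, by linarith⟩

theorem exists_mem_stateSet_eq (hle : ∀ x : A, |x| ≤ ‖x‖ • e) (ψ : A →ₗ[ℝ] ℝ)
    (hψ : ∀ a, 0 ≤ a → 0 ≤ ψ a) (hψe : ψ e = 1) : ∃ φ ∈ stateSet e, ⇑φ = ψ :=
  ⟨ψ.mkContinuous 1 fun x => by simpa [hψe] using abs_apply_le_of_nonneg hle hψ x,
    ⟨hψ, hψe⟩, rfl⟩

theorem abs_apply_le_norm (hle : ∀ x : A, |x| ≤ ‖x‖ • e) {φ : WeakDual ℝ A}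
    (hφ : φ ∈ stateSet e) (x : A) : |φ x| ≤ ‖x‖ := by
  simpa [hφ.2] using abs_apply_le_of_nonneg hle (ψ := (WeakDual.toStrongDual φ : A →ₗ[ℝ] ℝ)) hφ.1 x

theorem isCompact_stateSet (hle : ∀ x : A, |x| ≤ ‖x‖ • e) : IsCompact (stateSet e) := by
  refine (WeakDual.isCompact_closedBall (𝕜 := ℝ) 0 1).of_isClosed_subset isClosed_stateSet
    fun φ hφ => ?_
  simpa using ContinuousLinearMap.opNorm_le_bound _ zero_le_one fun x => by
    simpa using abs_apply_le_norm hle hφ x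

theorem isCompact_characterSet (hle : ∀ x : A, |x| ≤ ‖x‖ • e) :
    IsCompact (characterSet mul e) := by
  refine (isCompact_stateSet hle).of_isClosed_subset ?_ fun φ hφ => hφ.1
  simp only [characterSet, Set.ofPred_and, Set.ofPred_mem_eq, Set.ofPred_forall]
  exact isClosed_stateSet.inter <| isClosed_iInter fun x => isClosed_iInter fun y =>
    isClosed_eq (WeakDual.eval_continuous _)
      ((WeakDual.eval_continuous x).mul (WeakDual.eval_continuous y))

theorem mul_le_norm_smul_left (hle : ∀ x : A, |x| ≤ ‖x‖ • e)
    (hmul : ∀ a b, 0 ≤ a → 0 ≤ b → 0 ≤ mul a b) (hone_mul : ∀ a, mul e a = a) (u : A) {x : A}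
    (hx : 0 ≤ x) : mul u x ≤ ‖u‖ • x := by
  have h := hmul _ x (sub_nonneg.2 ((le_abs_self u).trans (hle u))) hx
  rwa [map_sub, LinearMap.sub_apply, map_smul, LinearMap.smul_apply, hone_mul, sub_nonneg] at h

theorem mul_le_norm_smul_right (hle : ∀ x : A, |x| ≤ ‖x‖ • e)
    (hmul : ∀ a b, 0 ≤ a → 0 ≤ b → 0 ≤ mul a b) (hmul_one : ∀ a, mul a e = a) (u : A) {x : A}
    (hx : 0 ≤ x) : mul x u ≤ ‖u‖ • x := by
  have h := hmul x _ hx (sub_nonneg.2 ((le_abs_self u).trans (hle u)))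
  rwa [map_sub, map_smul, hmul_one, sub_nonneg] at h

variable [PosSMulMono ℝ A]

theorem abs_le_norm_smul_of_norm_eq_sInf [ClosedIciTopology A]
    (order_unit : ∀ x : A, ∃ l : ℝ, 0 ≤ l ∧ |x| ≤ l • e)
    (am_norm : ∀ x : A, ‖x‖ = sInf {l : ℝ | 0 < l ∧ |x| ≤ l • e}) (x : A) :
    |x| ≤ ‖x‖ • e := by
  have he : 0 ≤ e := by
    obtain ⟨l, hl, h⟩ := order_unit e
    exact nonneg_of_abs_le_smul_self hl h
  have hne : {l : ℝ | 0 < l ∧ |x| ≤ l • e}.Nonempty := by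
    obtain ⟨l, hl, h⟩ := order_unit x
    exact ⟨l + 1, by positivity, h.trans (smul_le_smul_of_nonneg_right (by linarith) he)⟩
  have hlim : Tendsto (fun t : ℝ => t • e) (𝓝[>] ‖x‖) (𝓝 (‖x‖ • e)) :=
    ((continuous_id.smul continuous_const).tendsto _).mono_left nhdsWithin_le_nhds
  refine ge_of_tendsto hlim ?_
  filter_upwards [self_mem_nhdsWithin] with t (ht : ‖x‖ < t)
  obtain ⟨l, hl, hlt⟩ := exists_lt_of_csInf_lt hne (am_norm x ▸ ht)
  exact hl.2.trans (smul_le_smul_of_nonneg_right hlt.le he)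

theorem nonneg_of_forall_abs_le_norm_smul (hle : ∀ x : A, |x| ≤ ‖x‖ • e) : 0 ≤ e :=
  nonneg_of_abs_le_smul_self (norm_nonneg e) (hle e)

theorem exists_mem_stateSet_apply_eq_norm [HasSolidNorm A] (hle : ∀ x : A, |x| ≤ ‖x‖ • e)
    (he₁ : ‖e‖ = 1) {u : A} (hu : 0 ≤ u) (hu₀ : u ≠ 0) : ∃ φ ∈ stateSet e, φ u = ‖u‖ := by
  let N : A → ℝ := fun x => ‖x⁺‖
  have N_hom : ∀ c : ℝ, 0 < c → ∀ x, N (c • x) = c * N x := fun c hc x => by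
    simp [N, smul_posPart_of_pos hc, norm_smul, abs_of_pos hc]
  have N_add : ∀ x y, N (x + y) ≤ N x + N y := norm_posPart_add_le
  let f := LinearPMap.mkSpanSingleton (K := ℝ) (L := ℝ) (σ := RingHom.id ℝ) u ‖u‖ hu₀
  have hfN : ∀ x : f.domain, f x ≤ N x := by
    rintro ⟨x, hx⟩
    obtain ⟨c, rfl⟩ := Submodule.mem_span_singleton.1 hx
    rw [LinearPMap.mkSpanSingleton'_apply, smul_eq_mul]
    rcases le_or_gt 0 c with hc | hc
    · simp [N, posPart_eq_self.2 (smul_nonneg hc hu), norm_smul, abs_of_nonneg hc]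
    · exact (mul_nonpos_of_nonpos_of_nonneg hc.le (norm_nonneg u)).trans (norm_nonneg _)
  obtain ⟨g, hgf, hgN⟩ := exists_extension_of_le_sublinear f N N_hom N_add hfN
  have hgu : g u = ‖u‖ := by
    have h := hgf ⟨u, Submodule.mem_span_singleton_self u⟩
    rwa [LinearPMap.mkSpanSingleton_apply] at h
  have hg : ∀ a, 0 ≤ a → 0 ≤ g a := fun a ha => by
    simpa [N, posPart_eq_zero.2 (neg_nonpos.2 ha)] using hgN (-a)
  have hge : g e = 1 := by
    have he := nonneg_of_forall_abs_le_norm_smul hle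
    refine le_antisymm (by simpa [N, he₁, posPart_eq_self.2 he] using hgN e) ?_
    have h := (le_abs_self (g u)).trans (abs_apply_le_of_nonneg hle hg u)
    rw [hgu] at h
    exact (le_mul_iff_one_le_left (norm_pos_iff.2 hu₀)).1 h
  obtain ⟨φ, hφ, hφg⟩ := exists_mem_stateSet_eq hle g hg hge
  exact ⟨φ, hφ, hφg ▸ hgu⟩

theorem exists_mem_extremePoints_stateSet_apply_eq_norm [HasSolidNorm A]
    (hle : ∀ x : A, |x| ≤ ‖x‖ • e) (he₁ : ‖e‖ = 1) {u : A} (hu : 0 ≤ u) :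
    ∃ φ ∈ (stateSet e).extremePoints ℝ, φ u = ‖u‖ := by
  have he₀ : e ≠ 0 := by rintro rfl; simp at he₁
  obtain ⟨φ₀, hφ₀, -⟩ :=
    exists_mem_stateSet_apply_eq_norm hle he₁ (nonneg_of_forall_abs_le_norm_smul hle) he₀
  have : LocallyConvexSpace ℝ (WeakDual ℝ A) := WeakBilin.locallyConvexSpace
  -- the ascribed type pins the `WeakDual` module structure; inlined, `ContinuousSMul` is not found
  let evalAt : StrongDual ℝ (WeakDual ℝ A) := WeakBilin.eval (topDualPairing ℝ A) u
  obtain ⟨φ, hφ, hmax⟩ :=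
    (isCompact_stateSet hle).exists_mem_extremePoints_isMaxOn ⟨φ₀, hφ₀⟩ evalAt
  refine ⟨φ, hφ, le_antisymm (le_of_abs_le (abs_apply_le_norm hle hφ.1 u)) ?_⟩
  rcases eq_or_ne u 0 with rfl | hu₀
  · simp
  obtain ⟨ψ, hψ, hψu⟩ := exists_mem_stateSet_apply_eq_norm hle he₁ hu hu₀
  exact hψu ▸ hmax hψ

theorem apply_eq_mul_of_add_eq_smul (hle : ∀ x : A, |x| ≤ ‖x‖ • e) {φ : WeakDual ℝ A}
    (hφ : φ ∈ (stateSet e).extremePoints ℝ) {c : ℝ} {ψ₁ ψ₂ : A →ₗ[ℝ] ℝ}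
    (hψ₁ : ∀ a, 0 ≤ a → 0 ≤ ψ₁ a) (hψ₂ : ∀ a, 0 ≤ a → 0 ≤ ψ₂ a)
    (hsum : ∀ a, ψ₁ a + ψ₂ a = c * φ a) (a : A) : ψ₁ a = ψ₁ e * φ a := by
  have he := nonneg_of_forall_abs_le_norm_smul hle
  have eq_zero : ∀ ψ : A →ₗ[ℝ] ℝ, (∀ a, 0 ≤ a → 0 ≤ ψ a) → ψ e = 0 → ψ a = 0 := fun ψ hψ hψe =>
    abs_nonpos_iff.1 (by simpa [hψe] using abs_apply_le_of_nonneg hle hψ a)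
  obtain rfl : c = ψ₁ e + ψ₂ e := by simpa [hφ.1.2] using (hsum e).symm
  rcases (hψ₁ e he).eq_or_lt with h₁ | h₁
  · simp [eq_zero ψ₁ hψ₁ h₁.symm, ← h₁]
  rcases (hψ₂ e he).eq_or_lt with h₂ | h₂
  · simpa [eq_zero ψ₂ hψ₂ h₂.symm, ← h₂] using hsum a
  obtain ⟨φ₁, hφ₁, hφ₁ψ⟩ := exists_mem_stateSet_eq hle ((ψ₁ e)⁻¹ • ψ₁)
    (fun a ha => smul_nonneg (inv_nonneg.2 h₁.le) (hψ₁ a ha)) (by simp [h₁.ne'])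
  obtain ⟨φ₂, hφ₂, hφ₂ψ⟩ := exists_mem_stateSet_eq hle ((ψ₂ e)⁻¹ • ψ₂)
    (fun a ha => smul_nonneg (inv_nonneg.2 h₂.le) (hψ₂ a ha)) (by simp [h₂.ne'])
  have hseg : φ ∈ openSegment ℝ φ₁ φ₂ := by
    have hc := add_pos h₁ h₂
    refine ⟨ψ₁ e / (ψ₁ e + ψ₂ e), ψ₂ e / (ψ₁ e + ψ₂ e), div_pos h₁ hc, div_pos h₂ hc,
      by field_simp, ?_⟩
    refine DFunLike.ext _ _ fun x => ?_
    change ψ₁ e / (ψ₁ e + ψ₂ e) * φ₁ x + ψ₂ e / (ψ₁ e + ψ₂ e) * φ₂ x = φ x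
    simp only [hφ₁ψ, hφ₂ψ, LinearMap.smul_apply, smul_eq_mul]
    field_simp
    linarith [hsum x]
  have h := congrArg (fun φ : WeakDual ℝ A => φ a) ((mem_extremePoints.1 hφ).2 φ₁ hφ₁ φ₂ hφ₂ hseg).1
  simp only [hφ₁ψ, LinearMap.smul_apply, smul_eq_mul] at h
  field_simp at h
  linarith

theorem mul_eq_zero_of_inf_eq_zero (hle : ∀ x : A, |x| ≤ ‖x‖ • e)
    (hmul : ∀ a b, 0 ≤ a → 0 ≤ b → 0 ≤ mul a b) (hone_mul : ∀ a, mul e a = a)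
    (hmul_one : ∀ a, mul a e = a) {u v : A} (hu : 0 ≤ u) (hv : 0 ≤ v) (huv : u ⊓ v = 0) :
    mul u v = 0 := by
  set c := ‖u‖ + ‖v‖ + 1
  have hc : 0 < c := by positivity
  have hleft : mul u v ≤ c • v := (mul_le_norm_smul_left mul hle hmul hone_mul u hv).trans
    (smul_le_smul_of_nonneg_right (by linarith [norm_nonneg v]) hv)
  have hright : mul u v ≤ c • u := (mul_le_norm_smul_right mul hle hmul hmul_one v hu).trans
    (smul_le_smul_of_nonneg_right (by linarith [norm_nonneg u]) hu)
  refine le_antisymm ?_ (hmul u v hu hv)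
  simpa [← smul_inf_of_pos hc, huv] using le_inf hright hleft

theorem map_mul_of_mem_extremePoints (hle : ∀ x : A, |x| ≤ ‖x‖ • e)
    (hmul : ∀ a b, 0 ≤ a → 0 ≤ b → 0 ≤ mul a b) (hone_mul : ∀ a, mul e a = a)
    (hmul_one : ∀ a, mul a e = a) {φ : WeakDual ℝ A} (hφ : φ ∈ (stateSet e).extremePoints ℝ)
    (x y : A) : φ (mul x y) = φ x * φ y := by
  have hadd : 0 ≤ ‖x‖ • e + x := neg_le_iff_add_nonneg'.1 (neg_le.1 ((neg_le_abs x).trans (hle x)))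
  have hsub : 0 ≤ ‖x‖ • e - x := sub_nonneg.2 ((le_abs_self x).trans (hle x))
  let φ' : A →ₗ[ℝ] ℝ := WeakDual.toStrongDual φ
  have h := apply_eq_mul_of_add_eq_smul hle hφ (c := 2 * ‖x‖)
    (ψ₁ := φ' ∘ₗ mul (‖x‖ • e + x)) (ψ₂ := φ' ∘ₗ mul (‖x‖ • e - x))
    (fun a ha => hφ.1.1 _ (hmul _ a hadd ha)) (fun a ha => hφ.1.1 _ (hmul _ a hsub ha))
    (fun a => by
      simp only [φ', LinearMap.comp_apply, ContinuousLinearMap.coe_coe, map_add, map_sub,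
        map_smul, LinearMap.add_apply, LinearMap.sub_apply, LinearMap.smul_apply, hone_mul,
        WeakDual.toStrongDual_apply, smul_eq_mul]
      ring) y
  simp only [φ', LinearMap.comp_apply, ContinuousLinearMap.coe_coe, map_add, map_smul,
    LinearMap.add_apply, LinearMap.smul_apply, hone_mul, hmul_one, WeakDual.toStrongDual_apply,
    smul_eq_mul, hφ.1.2, mul_one] at h
  linarith

theorem map_posPart_of_mem_characterSet (hle : ∀ x : A, |x| ≤ ‖x‖ • e)
    (hmul : ∀ a b, 0 ≤ a → 0 ≤ b → 0 ≤ mul a b) (hone_mul : ∀ a, mul e a = a)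
    (hmul_one : ∀ a, mul a e = a) {φ : WeakDual ℝ A} (hφ : φ ∈ characterSet mul e) (x : A) :
    φ x⁺ = (φ x)⁺ := by
  have hx : φ x = φ x⁺ - φ x⁻ := by rw [← map_sub, posPart_sub_negPart]
  have hp := hφ.1.1 _ (posPart_nonneg x)
  have hn := hφ.1.1 _ (negPart_nonneg x)
  have hdisj : φ x⁺ * φ x⁻ = 0 := by
    rw [← hφ.2, mul_eq_zero_of_inf_eq_zero mul hle hmul hone_mul hmul_one (posPart_nonneg x)
      (negPart_nonneg x) (posPart_inf_negPart_eq_zero x), map_zero]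
  rcases mul_eq_zero.1 hdisj with h | h
  · rw [h, posPart_eq_zero.2 (show φ x ≤ 0 by linarith)]
  · rw [posPart_eq_self.2 (show 0 ≤ φ x by linarith), hx, h, sub_zero]

theorem map_sup_of_mem_characterSet (hle : ∀ x : A, |x| ≤ ‖x‖ • e)
    (hmul : ∀ a b, 0 ≤ a → 0 ≤ b → 0 ≤ mul a b) (hone_mul : ∀ a, mul e a = a)
    (hmul_one : ∀ a, mul a e = a) {φ : WeakDual ℝ A} (hφ : φ ∈ characterSet mul e) (x y : A) :
    φ (x ⊔ y) = φ x ⊔ φ y := by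
  rw [sup_eq_add_posPart_sub, sup_eq_add_posPart_sub, map_add,
    map_posPart_of_mem_characterSet mul hle hmul hone_mul hmul_one hφ, map_sub]

theorem exists_mem_characterSet_abs_apply_eq_norm [HasSolidNorm A]
    (hle : ∀ x : A, |x| ≤ ‖x‖ • e) (he₁ : ‖e‖ = 1) (hmul : ∀ a b, 0 ≤ a → 0 ≤ b → 0 ≤ mul a b)
    (hone_mul : ∀ a, mul e a = a) (hmul_one : ∀ a, mul a e = a) (x : A) :
    ∃ φ ∈ characterSet mul e, |φ x| = ‖x‖ := by
  obtain ⟨φ, hφ, hφx⟩ := exists_mem_extremePoints_stateSet_apply_eq_norm hle he₁ (abs_nonneg x)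
  have hφK : φ ∈ characterSet mul e :=
    ⟨hφ.1, map_mul_of_mem_extremePoints mul hle hmul hone_mul hmul_one hφ⟩
  refine ⟨φ, hφK, ?_⟩
  rw [← norm_abs_eq_norm, ← hφx]
  have h := map_sup_of_mem_characterSet mul hle hmul hone_mul hmul_one hφK x (-x)
  rw [map_neg] at h
  exact h.symm

end AMSpace

open AMSpace in
theorem am_algebra_lattice_algebra_isometric_to_CK
    {A : Type u} [NormedAddCommGroup A] [Lattice A] [IsOrderedAddMonoid A] [HasSolidNorm A]
    [NormedSpace ℝ A]
    [PosSMulStrictMono ℝ A] [CompleteSpace A]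
    -- Banach lattice algebra structure
    (mul : A →ₗ[ℝ] A →ₗ[ℝ] A)
    (mul_nonneg : ∀ a b : A, 0 ≤ a → 0 ≤ b → 0 ≤ mul a b)
    -- identity of norm one
    (e : A) (one_mul : ∀ a : A, mul e a = a) (mul_one : ∀ a : A, mul a e = a)
    (norm_e : ‖e‖ = 1)
    -- AM-space with unit `e`
    (order_unit : ∀ x : A, ∃ l : ℝ, 0 ≤ l ∧ |x| ≤ l • e)
    (am_norm : ∀ x : A, ‖x‖ = sInf {l : ℝ | 0 < l ∧ |x| ≤ l • e}) :
    ∃ (K : Type u) (_ : TopologicalSpace K) (_ : CompactSpace K) (_ : T2Space K)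
      (T : A →ₗ[ℝ] C(K, ℝ)),
      Function.Bijective T ∧
      (∀ x : A, ‖T x‖ = ‖x‖) ∧
      (∀ x y : A, T (mul x y) = T x * T y) ∧
      (∀ x y : A, T (x ⊔ y) = T x ⊔ T y) ∧
      T e = 1 := by
  have hle := abs_le_norm_smul_of_norm_eq_sInf order_unit am_norm
  have : CompactSpace (characterSet mul e) :=
    isCompact_iff_compactSpace.1 (isCompact_characterSet mul hle)
  set T := evalOn (characterSet mul e)
  have hT : ∀ x, ‖T x‖ = ‖x‖ := fun x => norm_evalOn (fun φ hφ => abs_apply_le_norm hle hφ.1 x)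
    (exists_mem_characterSet_abs_apply_eq_norm mul hle norm_e mul_nonneg one_mul mul_one x)
  have hTmul : ∀ x y, T (mul x y) = T x * T y := fun x y => ContinuousMap.ext fun φ => φ.2.2 x y
  have hTe : T e = 1 := ContinuousMap.ext fun φ => φ.2.1.2
  have hsurj : Function.Surjective T := by
    refine surjective_of_isometry_of_separatesPoints T hT ⟨e, hTe⟩
      (by rintro _ _ ⟨a, rfl⟩ ⟨b, rfl⟩; exact ⟨mul a b, hTmul a b⟩) fun φ ψ hφψ => ?_
    contrapose! hφψ
    exact Subtype.ext (DFunLike.ext _ _ hφψ)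
  refine ⟨characterSet mul e, inferInstance, inferInstance, inferInstance, T,
    ⟨(AddMonoidHomClass.isometry_of_norm T hT).injective, hsurj⟩, hT, hTmul, fun x y => ?_, hTe⟩
  exact ContinuousMap.ext fun φ =>
    map_sup_of_mem_characterSet mul hle mul_nonneg one_mul mul_one φ.2 x y
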